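/- arXiv:2212.01950 — 2 statements merged into one kernel-verified Lean document; each statement's English description precedes it below -/
import Mathlib

section
/- Let s ∈ (0,1), x₀ ∈ ℝⁿ, R > 0 and N ∈ ℕ. There is a constant C depending only on n and s such that for any u ∈ L¹_{2s}(ℝⁿ), (2^{-N}R)^{2s} ∫_{ℝⁿ \ B_{2^{-N}R}(x₀)} |u(y) - (u)_{B_{2^{-N}R}(x₀)}| / |x₀-y|^{n+2s} dy ≤ C ( Σ_{k=1}^{N} 2^{-2sk} ⨍_{B_{2^{k-N}R}(x₀)} |u - (u)_{B_{2^{k-N}R}(x₀)}| dx + (2^{-N}R)^{2s} ∫_{ℝⁿ \ B_R(x₀)} |u(y) - (u)_{B_R(x₀)}| / |x₀-y|^{n+2s} dy ). -/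
open MeasureTheory Metric Set
open scoped ENNReal

noncomputable section

namespace TDA

lemma exists_pow_cover {x : ℝ} (hx : 1 ≤ x) : ∃ m : ℕ, (2:ℝ)^m ≤ x ∧ x < 2^(m+1) := by
  have hx0 : (0:ℝ) < x := lt_of_lt_of_le one_pos hx
  refine ⟨⌊Real.logb 2 x⌋₊, ?_, ?_⟩
  · calc (2:ℝ)^(⌊Real.logb 2 x⌋₊) = (2:ℝ)^((⌊Real.logb 2 x⌋₊ : ℝ)) :=
        (Real.rpow_natCast 2 _).symm
    _ ≤ (2:ℝ)^(Real.logb 2 x) :=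
        Real.rpow_le_rpow_of_exponent_le one_le_two
          (Nat.floor_le (Real.logb_nonneg one_lt_two hx))
    _ = x := Real.rpow_logb two_pos (by norm_num) hx0
  · calc x = (2:ℝ)^(Real.logb 2 x) := (Real.rpow_logb two_pos (by norm_num) hx0).symm
    _ < (2:ℝ)^((⌊Real.logb 2 x⌋₊ : ℝ) + 1) :=
        Real.rpow_lt_rpow_of_exponent_lt one_lt_two (Nat.lt_floor_add_one _)
    _ = (2:ℝ)^(⌊Real.logb 2 x⌋₊ + 1) := by
        rw [← Real.rpow_natCast 2 (⌊Real.logb 2 x⌋₊ + 1)]; push_cast; ring_nf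

/-- the constant in the tail estimate -/
def tailK (n : ℕ) (s : ℝ) : ℝ :=
  2^(n:ℝ) * (volume (ball (0:EuclideanSpace ℝ (Fin n)) 1)).toReal * (1 - 2^(-(2*s)))⁻¹

lemma tailK_nonneg (n : ℕ) {s : ℝ} (hs0 : 0 < s) : 0 ≤ tailK n s := by
  have hq : (2:ℝ)^(-(2*s)) < 1 :=
    Real.rpow_lt_one_of_one_lt_of_neg one_lt_two (by linarith)
  have h2 : (0:ℝ) < 1 - 2^(-(2*s)) := by linarith
  have := ENNReal.toReal_nonneg (a := volume (ball (0:EuclideanSpace ℝ (Fin n)) 1))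
  unfold tailK
  positivity

lemma tail_one (n : ℕ) (hn : 1 ≤ n) {s : ℝ} (hs0 : 0 < s)
    (x₀ : EuclideanSpace ℝ (Fin n)) {r : ℝ} (hr : 0 < r) :
    ∫⁻ y in (ball x₀ r)ᶜ, ENNReal.ofReal (1 / ‖x₀ - y‖ ^ ((n:ℝ) + 2*s)) ≤
      ENNReal.ofReal (tailK n s) * ENNReal.ofReal (r ^ (-(2*s))) := by
  have hp : (0:ℝ) < (n:ℝ) + 2*s := by positivity
  set p := (n:ℝ) + 2*s with hpdef
  set V := volume (ball (0:EuclideanSpace ℝ (Fin n)) 1) with hV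
  have hVlt : V ≠ ⊤ := measure_ball_lt_top.ne
  have hq1 : (2:ℝ)^(-(2*s)) < 1 :=
    Real.rpow_lt_one_of_one_lt_of_neg one_lt_two (by linarith)
  have hq0 : (0:ℝ) ≤ (2:ℝ)^(-(2*s)) := Real.rpow_nonneg (by norm_num) _
  -- covering by annuli
  have hcover : (ball x₀ r)ᶜ ⊆
      ⋃ m : ℕ, (ball x₀ ((2:ℝ)^(m+1) * r) \ ball x₀ ((2:ℝ)^m * r)) := by
    intro y hy
    simp only [mem_compl_iff, mem_ball, not_lt] at hy
    obtain ⟨m, h1, h2⟩ := exists_pow_cover (x := dist y x₀ / r)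
      ((le_div_iff₀ hr).2 (by linarith))
    refine mem_iUnion.2 ⟨m, ?_, ?_⟩
    · exact mem_ball.2 ((div_lt_iff₀ hr).1 h2)
    · simp only [mem_ball, not_lt]
      exact (le_div_iff₀ hr).1 h1
  -- bound on each annulus
  have hann : ∀ m : ℕ,
      ∫⁻ y in (ball x₀ ((2:ℝ)^(m+1) * r) \ ball x₀ ((2:ℝ)^m * r)),
        ENNReal.ofReal (1 / ‖x₀ - y‖ ^ p) ≤
      ENNReal.ofReal (2^(n:ℝ) * r^(-(2*s))) * V * (ENNReal.ofReal ((2:ℝ)^(-(2*s))))^m := by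
    intro m
    have h2m : (0:ℝ) < (2:ℝ)^m := by positivity
    have hrad : (0:ℝ) < (2:ℝ)^m * r := by positivity
    have step1 : ∫⁻ y in (ball x₀ ((2:ℝ)^(m+1) * r) \ ball x₀ ((2:ℝ)^m * r)),
        ENNReal.ofReal (1 / ‖x₀ - y‖ ^ p) ≤
        ENNReal.ofReal (((2:ℝ)^m * r) ^ (-p)) *
          volume (ball x₀ ((2:ℝ)^(m+1) * r) \ ball x₀ ((2:ℝ)^m * r)) := by
      rw [← setLIntegral_const]
      refine setLIntegral_mono measurable_const (fun y hy => ?_)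
      obtain ⟨-, hy2⟩ := hy
      simp only [mem_ball, not_lt] at hy2
      have hxy : (2:ℝ)^m * r ≤ ‖x₀ - y‖ := by
        rw [norm_sub_rev, ← dist_eq_norm]; exact hy2
      have hxyp : (0:ℝ) < ‖x₀ - y‖ ^ p :=
        Real.rpow_pos_of_pos (lt_of_lt_of_le hrad hxy) _
      refine ENNReal.ofReal_le_ofReal ?_
      rw [Real.rpow_neg hrad.le, one_div]
      exact inv_anti₀ (Real.rpow_pos_of_pos hrad _)
        (Real.rpow_le_rpow hrad.le hxy hp.le)
    have hvol : volume (ball x₀ ((2:ℝ)^(m+1) * r) \ ball x₀ ((2:ℝ)^m * r)) ≤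
        ENNReal.ofReal (((2:ℝ)^(m+1) * r) ^ n) * V := by
      calc volume (ball x₀ ((2:ℝ)^(m+1) * r) \ ball x₀ ((2:ℝ)^m * r)) ≤
          volume (ball x₀ ((2:ℝ)^(m+1) * r)) := measure_mono diff_subset
      _ = ENNReal.ofReal (((2:ℝ)^(m+1) * r) ^ n) * V := by
          rw [Measure.addHaar_ball_of_pos volume x₀ (by positivity)]
          simp [finrank_euclideanSpace_fin]
          rfl
    have harith : ((2:ℝ)^m * r) ^ (-p) * (((2:ℝ)^(m+1) * r) ^ n) =
        2^(n:ℝ) * r^(-(2*s)) * ((2:ℝ)^(-(2*s)))^m := by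
      have e2 : ((2:ℝ)^m * r)^(-p) = (2:ℝ)^((m:ℝ)*(-p)) * r^(-p) := by
        rw [Real.mul_rpow (by positivity) hr.le, ← Real.rpow_natCast 2 m,
          ← Real.rpow_mul (by norm_num : (0:ℝ) ≤ 2)]
      have e3 : ((2:ℝ)^(m+1) * r)^n = (2:ℝ)^((((m+1) : ℕ):ℝ)*(n:ℝ)) * r^((n:ℝ)) := by
        rw [mul_pow, ← Real.rpow_natCast ((2:ℝ)^(m+1)) n, ← Real.rpow_natCast 2 (m+1),
          ← Real.rpow_mul (by norm_num : (0:ℝ) ≤ 2), ← Real.rpow_natCast r n]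
      have e4 : ((2:ℝ)^(-(2*s)))^m = (2:ℝ)^(-(2*s)*(m:ℝ)) := by
        rw [← Real.rpow_natCast ((2:ℝ)^(-(2*s))) m,
          ← Real.rpow_mul (by norm_num : (0:ℝ) ≤ 2)]
      rw [e2, e3, e4, mul_mul_mul_comm, ← Real.rpow_add two_pos, ← Real.rpow_add hr,
        mul_right_comm, ← Real.rpow_add two_pos]
      congr 1
      · congr 1
        push_cast
        rw [hpdef]; ring
      · congr 1
        rw [hpdef]; ring
    calc ∫⁻ y in (ball x₀ ((2:ℝ)^(m+1) * r) \ ball x₀ ((2:ℝ)^m * r)),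
        ENNReal.ofReal (1 / ‖x₀ - y‖ ^ p) ≤
        ENNReal.ofReal (((2:ℝ)^m * r) ^ (-p)) *
          (ENNReal.ofReal (((2:ℝ)^(m+1) * r) ^ n) * V) :=
          le_trans step1 (mul_le_mul_right hvol _)
      _ = ENNReal.ofReal (((2:ℝ)^m * r) ^ (-p) * (((2:ℝ)^(m+1) * r) ^ n)) * V := by
          rw [← mul_assoc, ← ENNReal.ofReal_mul (Real.rpow_nonneg hrad.le _)]
      _ = ENNReal.ofReal (2^(n:ℝ) * r^(-(2*s)) * ((2:ℝ)^(-(2*s)))^m) * V := by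
          rw [harith]
      _ = ENNReal.ofReal (2^(n:ℝ) * r^(-(2*s))) * V * (ENNReal.ofReal ((2:ℝ)^(-(2*s))))^m := by
          rw [ENNReal.ofReal_mul (by positivity), ENNReal.ofReal_pow hq0]
          ring
  calc ∫⁻ y in (ball x₀ r)ᶜ, ENNReal.ofReal (1 / ‖x₀ - y‖ ^ p) ≤
      ∫⁻ y in ⋃ m : ℕ, (ball x₀ ((2:ℝ)^(m+1) * r) \ ball x₀ ((2:ℝ)^m * r)),
        ENNReal.ofReal (1 / ‖x₀ - y‖ ^ p) := lintegral_mono_set hcover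
    _ ≤ ∑' (m : ℕ), ∫⁻ y in (ball x₀ ((2:ℝ)^(m+1) * r) \ ball x₀ ((2:ℝ)^m * r)),
        ENNReal.ofReal (1 / ‖x₀ - y‖ ^ p) := lintegral_iUnion_le _ _
    _ ≤ ∑' (m : ℕ), ENNReal.ofReal (2^(n:ℝ) * r^(-(2*s))) * V *
        (ENNReal.ofReal ((2:ℝ)^(-(2*s))))^m := ENNReal.tsum_le_tsum hann
    _ = ENNReal.ofReal (2^(n:ℝ) * r^(-(2*s))) * V *
        (1 - ENNReal.ofReal ((2:ℝ)^(-(2*s))))⁻¹ := by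
        rw [ENNReal.tsum_mul_left, ENNReal.tsum_geometric]
    _ ≤ ENNReal.ofReal (tailK n s) * ENNReal.ofReal (r ^ (-(2*s))) := by
        have h1 : (1 : ℝ≥0∞) - ENNReal.ofReal ((2:ℝ)^(-(2*s))) =
            ENNReal.ofReal (1 - (2:ℝ)^(-(2*s))) := by
          rw [ENNReal.ofReal_sub _ hq0, ENNReal.ofReal_one]
        rw [h1, ← ENNReal.ofReal_inv_of_pos (by linarith),
          ← ENNReal.ofReal_toReal hVlt, ← ENNReal.ofReal_mul (by positivity),
          ← ENNReal.ofReal_mul (by positivity),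
          ← ENNReal.ofReal_mul (tailK_nonneg n hs0)]
        refine ENNReal.ofReal_le_ofReal (le_of_eq ?_)
        unfold tailK
        rw [hV]
        ring

end TDA

lemma integrableOn_ball' {n : ℕ} {u : EuclideanSpace ℝ (Fin n) → ℝ}
    (hu : LocallyIntegrable u) (x₀ : EuclideanSpace ℝ (Fin n)) (r : ℝ) :
    IntegrableOn u (ball x₀ r) :=
  (hu.integrableOn_isCompact (isCompact_closedBall x₀ r)).mono_set ball_subset_closedBall

lemma avg_sub_const {n : ℕ} {u : EuclideanSpace ℝ (Fin n) → ℝ}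
    (x₀ : EuclideanSpace ℝ (Fin n)) {r : ℝ} (hr : 0 < r)
    (hf : IntegrableOn u (ball x₀ r)) (c : ℝ) :
    ⨍ x in ball x₀ r, (u x - c) = (⨍ x in ball x₀ r, u x) - c := by
  have h0 : (volume (ball x₀ r)).toReal ≠ 0 :=
    (ENNReal.toReal_pos (measure_ball_pos volume x₀ hr).ne' measure_ball_lt_top.ne).ne'
  rw [setAverage_eq, setAverage_eq,
    integral_sub hf (integrableOn_const measure_ball_lt_top.ne),
    setIntegral_const, smul_eq_mul, smul_eq_mul, smul_eq_mul, mul_sub]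
  congr 1
  rw [measureReal_def]
  field_simp

lemma abs_avg_le {n : ℕ} (u : EuclideanSpace ℝ (Fin n) → ℝ)
    (x₀ : EuclideanSpace ℝ (Fin n)) (r : ℝ) :
    |⨍ x in ball x₀ r, u x| ≤
      (volume (ball x₀ r)).toReal⁻¹ * ∫ x in ball x₀ r, |u x| := by
  rw [setAverage_eq, smul_eq_mul, abs_mul, abs_inv, abs_of_nonneg measureReal_nonneg, measureReal_def]
  have := norm_integral_le_integral_norm (μ := volume.restrict (ball x₀ r)) u
  simp only [Real.norm_eq_abs] at this
  gcongr

lemma avg_diff (n : ℕ) {u : EuclideanSpace ℝ (Fin n) → ℝ} (hu : LocallyIntegrable u)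
    (x₀ : EuclideanSpace ℝ (Fin n)) {r : ℝ} (hr : 0 < r) :
    |(⨍ x in ball x₀ r, u x) - ⨍ x in ball x₀ (2*r), u x| ≤
      2^(n:ℕ) * ⨍ x in ball x₀ (2*r), |u x - ⨍ y in ball x₀ (2*r), u y| := by
  set c := ⨍ x in ball x₀ (2*r), u x with hc
  have hint2 : IntegrableOn u (ball x₀ (2*r)) := integrableOn_ball' hu x₀ _
  have hint1 : IntegrableOn u (ball x₀ r) := integrableOn_ball' hu x₀ _
  have hsub2 : IntegrableOn (fun x => |u x - c|) (ball x₀ (2*r)) :=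
    (hint2.sub (integrableOn_const measure_ball_lt_top.ne)).abs
  have hm1 : 0 < (volume (ball x₀ r)).toReal :=
    ENNReal.toReal_pos (measure_ball_pos volume x₀ hr).ne' measure_ball_lt_top.ne
  have hm2 : 0 < (volume (ball x₀ (2*r))).toReal :=
    ENNReal.toReal_pos (measure_ball_pos volume x₀ (by linarith)).ne' measure_ball_lt_top.ne
  have hratio : (volume (ball x₀ (2*r))).toReal = 2^(n:ℕ) * (volume (ball x₀ r)).toReal := by
    rw [Measure.addHaar_ball_of_pos volume x₀ hr,
      Measure.addHaar_ball_of_pos volume x₀ (by linarith : (0:ℝ) < 2*r)]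
    rw [ENNReal.toReal_mul, ENNReal.toReal_mul, ENNReal.toReal_ofReal (by positivity),
      ENNReal.toReal_ofReal (by positivity), finrank_euclideanSpace_fin, mul_pow]
    ring
  calc |(⨍ x in ball x₀ r, u x) - c| = |⨍ x in ball x₀ r, (u x - c)| := by
        rw [avg_sub_const x₀ hr hint1 c]
    _ ≤ (volume (ball x₀ r)).toReal⁻¹ * ∫ x in ball x₀ r, |u x - c| :=
        abs_avg_le _ x₀ r
    _ ≤ (volume (ball x₀ r)).toReal⁻¹ * ∫ x in ball x₀ (2*r), |u x - c| := by
        refine mul_le_mul_of_nonneg_left ?_ (inv_nonneg.2 ENNReal.toReal_nonneg)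
        refine setIntegral_mono_set hsub2 ?_ ?_
        · exact Filter.Eventually.of_forall (fun x => abs_nonneg _)
        · exact HasSubset.Subset.eventuallyLE (ball_subset_ball (by linarith))
    _ = 2^(n:ℕ) * ⨍ x in ball x₀ (2*r), |u x - c| := by
        rw [setAverage_eq, smul_eq_mul, measureReal_def, hratio, ← mul_assoc]
        rw [mul_inv, ← mul_assoc, mul_comm ((2:ℝ)^(n:ℕ))]
        congr 2
        rw [inv_mul_cancel₀ (by positivity : ((2:ℝ)^(n:ℕ)) ≠ 0), one_mul]

section Main

/-- moving between nonlocal tails on different dyadic scales. -/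
theorem tail_dyadic_estimate (n : ℕ) (hn : 1 ≤ n) (s : ℝ) (hs0 : 0 < s) (hs1 : s < 1) :
    ∃ C > 0, ∀ (u : EuclideanSpace ℝ (Fin n) → ℝ), LocallyIntegrable u →
      (∫⁻ y, ENNReal.ofReal (|u y| / (1 + ‖y‖ ^ ((n : ℝ) + 2 * s))) < ⊤) →
      ∀ (x₀ : EuclideanSpace ℝ (Fin n)) (R : ℝ), 0 < R → ∀ (N : ℕ),
      ENNReal.ofReal (((2 : ℝ) ^ (-(N : ℝ)) * R) ^ (2 * s)) *
          ∫⁻ y in (ball x₀ ((2 : ℝ) ^ (-(N : ℝ)) * R))ᶜ,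
            ENNReal.ofReal
              (|u y - ⨍ x in ball x₀ ((2 : ℝ) ^ (-(N : ℝ)) * R), u x| /
                ‖x₀ - y‖ ^ ((n : ℝ) + 2 * s)) ≤
        ENNReal.ofReal C *
          ((∑ k ∈ Finset.Icc 1 N,
              ENNReal.ofReal ((2 : ℝ) ^ (-(2 * s) * (k : ℝ)) *
                ⨍ x in ball x₀ ((2 : ℝ) ^ ((k : ℝ) - (N : ℝ)) * R),
                  |u x - ⨍ y in ball x₀ ((2 : ℝ) ^ ((k : ℝ) - (N : ℝ)) * R), u y|)) +
            ENNReal.ofReal (((2 : ℝ) ^ (-(N : ℝ)) * R) ^ (2 * s)) *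
              ∫⁻ y in (ball x₀ R)ᶜ,
                ENNReal.ofReal
                  (|u y - ⨍ x in ball x₀ R, u x| / ‖x₀ - y‖ ^ ((n : ℝ) + 2 * s))) := by
  classical
  set V : ℝ≥0∞ := volume (ball (0:EuclideanSpace ℝ (Fin n)) 1) with hV
  set K : ℝ := TDA.tailK n s with hK
  have hK0 : 0 ≤ K := TDA.tailK_nonneg n hs0
  have hVt : (0:ℝ) ≤ V.toReal := ENNReal.toReal_nonneg
  set c₁ : ℝ := 2^(n:ℕ) * K + 2^(n:ℕ) * V.toReal with hc₁
  have hc₁0 : 0 ≤ c₁ := by positivity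
  set C' : ℝ := c₁ * 2^(2*s) with hC'
  have hC'0 : 0 ≤ C' := by positivity
  refine ⟨C' + 1, by linarith, ?_⟩
  intro u hu _ x₀ R hR N
  set p : ℝ := (n:ℝ) + 2*s with hp
  have hppos : (0:ℝ) < p := by rw [hp]; positivity
  set ρ : ℕ → ℝ := fun j => (2:ℝ)^(-(j:ℝ)) * R with hρ
  have hρpos : ∀ j, 0 < ρ j := fun j => by
    rw [hρ]; positivity
  have hρsucc : ∀ j, ρ j = 2 * ρ (j+1) := by
    intro j
    rw [hρ]
    simp only
    rw [← mul_assoc]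
    congr 1
    rw [show (-((j:ℕ)+1:ℕ):ℝ) = (-1) + (-(j:ℝ)) by push_cast; ring,
      Real.rpow_add two_pos, ← mul_assoc, Real.rpow_neg_one]
    norm_num
  set mv : ℕ → ℝ := fun j => ⨍ x in ball x₀ (ρ j), u x with hmv
  set av : ℕ → ℝ := fun j => ⨍ x in ball x₀ (ρ j), |u x - mv j| with hav
  set T : ℕ → ℝ≥0∞ := fun j => ENNReal.ofReal ((ρ j)^(2*s)) *
      ∫⁻ y in (ball x₀ (ρ j))ᶜ, ENNReal.ofReal (|u y - mv j| / ‖x₀ - y‖ ^ p) with hT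
  -- integrability and positivity facts
  have hball : ∀ r : ℝ, IntegrableOn u (ball x₀ r) := fun r => integrableOn_ball' hu x₀ r
  have hsubint : ∀ (r : ℝ) (c : ℝ), IntegrableOn (fun x => |u x - c|) (ball x₀ r) :=
    fun r c => ((hball r).sub (integrableOn_const measure_ball_lt_top.ne)).abs
  have hvolpos : ∀ j, 0 < (volume (ball x₀ (ρ j))).toReal := fun j =>
    ENNReal.toReal_pos (measure_ball_pos volume x₀ (hρpos j)).ne' measure_ball_lt_top.ne
  have hav0 : ∀ j, 0 ≤ av j := by
    intro j
    rw [hav]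
    simp only
    rw [setAverage_eq, smul_eq_mul, measureReal_def]
    have h1 : 0 ≤ ∫ x in ball x₀ (ρ j), |u x - mv j| :=
      integral_nonneg (fun x => abs_nonneg _)
    positivity
  have hInt : ∀ j, ∫ x in ball x₀ (ρ j), |u x - mv j| =
      (volume (ball x₀ (ρ j))).toReal * av j := by
    intro j
    rw [hav]
    simp only
    rw [setAverage_eq, smul_eq_mul, measureReal_def, ← mul_assoc, mul_inv_cancel₀ (hvolpos j).ne', one_mul]
  -- measurability
  have hden_cont : Continuous fun y : EuclideanSpace ℝ (Fin n) => ‖x₀ - y‖ ^ p :=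
    ((continuous_const.sub continuous_id).norm).rpow_const (fun x => Or.inr hppos.le)
  have hmeasg : ∀ c : ℝ, Measurable fun y : EuclideanSpace ℝ (Fin n) =>
      ENNReal.ofReal (c / ‖x₀ - y‖ ^ p) :=
    fun c => (measurable_const.div hden_cont.measurable).ennreal_ofReal
  -- the recursion inequality
  have hrec : ∀ j, T (j+1) ≤ ENNReal.ofReal ((2:ℝ)^(-(2*s))) * T j +
      ENNReal.ofReal c₁ * ENNReal.ofReal (av j) := by
    intro j
    have hr1 : 0 < ρ (j+1) := hρpos _
    have hr0 : ρ j = 2 * ρ (j+1) := hρsucc j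
    have hd : |mv (j+1) - mv j| ≤ 2^(n:ℕ) * av j := by
      have h := avg_diff n hu x₀ hr1
      rw [hmv, hav]
      simp only
      rw [hr0, hmv]
      simp only
      rw [hr0]
      exact h
    -- pointwise triangle inequality
    have htri : ∀ y : EuclideanSpace ℝ (Fin n),
        ENNReal.ofReal (|u y - mv (j+1)| / ‖x₀ - y‖ ^ p) ≤
        ENNReal.ofReal (|u y - mv j| / ‖x₀ - y‖ ^ p) +
        ENNReal.ofReal (|mv (j+1) - mv j| / ‖x₀ - y‖ ^ p) := by
      intro y
      refine le_trans (ENNReal.ofReal_le_ofReal ?_) ENNReal.ofReal_add_le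
      rw [← add_div, div_eq_mul_inv, div_eq_mul_inv]
      refine mul_le_mul_of_nonneg_right ?_
        (inv_nonneg.2 (Real.rpow_nonneg (norm_nonneg _) _))
      calc |u y - mv (j+1)| ≤ |u y - mv j| + |mv j - mv (j+1)| := abs_sub_le _ _ _
        _ = |u y - mv j| + |mv (j+1) - mv j| := by rw [abs_sub_comm (mv j)]
    have htail1 : ∫⁻ y in (ball x₀ (ρ (j+1)))ᶜ,
        ENNReal.ofReal (1 / ‖x₀ - y‖ ^ p) ≤
        ENNReal.ofReal K * ENNReal.ofReal ((ρ (j+1)) ^ (-(2*s))) := by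
      rw [hK, hp]
      exact TDA.tail_one n hn hs0 x₀ hr1
    -- split off the constant part
    have hsplit : ∫⁻ y in (ball x₀ (ρ (j+1)))ᶜ,
        ENNReal.ofReal (|u y - mv (j+1)| / ‖x₀ - y‖ ^ p) ≤
        (∫⁻ y in (ball x₀ (ρ (j+1)))ᶜ, ENNReal.ofReal (|u y - mv j| / ‖x₀ - y‖ ^ p)) +
        ENNReal.ofReal (|mv (j+1) - mv j|) *
          ∫⁻ y in (ball x₀ (ρ (j+1)))ᶜ, ENNReal.ofReal (1 / ‖x₀ - y‖ ^ p) := by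
      calc ∫⁻ y in (ball x₀ (ρ (j+1)))ᶜ,
          ENNReal.ofReal (|u y - mv (j+1)| / ‖x₀ - y‖ ^ p) ≤
          ∫⁻ y in (ball x₀ (ρ (j+1)))ᶜ,
            (ENNReal.ofReal (|u y - mv j| / ‖x₀ - y‖ ^ p) +
             ENNReal.ofReal (|mv (j+1) - mv j| / ‖x₀ - y‖ ^ p)) :=
          lintegral_mono (fun y => htri y)
        _ = (∫⁻ y in (ball x₀ (ρ (j+1)))ᶜ, ENNReal.ofReal (|u y - mv j| / ‖x₀ - y‖ ^ p)) +
            ∫⁻ y in (ball x₀ (ρ (j+1)))ᶜ,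
              ENNReal.ofReal (|mv (j+1) - mv j| / ‖x₀ - y‖ ^ p) :=
          lintegral_add_right _ (hmeasg _)
        _ = (∫⁻ y in (ball x₀ (ρ (j+1)))ᶜ, ENNReal.ofReal (|u y - mv j| / ‖x₀ - y‖ ^ p)) +
            ENNReal.ofReal (|mv (j+1) - mv j|) *
              ∫⁻ y in (ball x₀ (ρ (j+1)))ᶜ, ENNReal.ofReal (1 / ‖x₀ - y‖ ^ p) := by
          congr 1
          rw [← lintegral_const_mul' _ _ ENNReal.ofReal_ne_top]
          refine lintegral_congr (fun y => ?_)
          rw [← ENNReal.ofReal_mul (abs_nonneg _), mul_one_div]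
    -- outer split into complement of big ball and annulus
    have hann : ∫⁻ y in (ball x₀ (ρ j) \ ball x₀ (ρ (j+1))),
        ENNReal.ofReal (|u y - mv j| / ‖x₀ - y‖ ^ p) ≤
        ENNReal.ofReal ((ρ (j+1))^(-p)) *
          ENNReal.ofReal ((volume (ball x₀ (ρ j))).toReal * av j) := by
      calc ∫⁻ y in (ball x₀ (ρ j) \ ball x₀ (ρ (j+1))),
          ENNReal.ofReal (|u y - mv j| / ‖x₀ - y‖ ^ p) ≤
          ∫⁻ y in (ball x₀ (ρ j) \ ball x₀ (ρ (j+1))),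
            ENNReal.ofReal ((ρ (j+1))^(-p)) * ENNReal.ofReal (|u y - mv j|) := by
            refine setLIntegral_mono' (measurableSet_ball.diff measurableSet_ball)
              (fun y hy => ?_)
            obtain ⟨-, hy2⟩ := hy
            simp only [mem_ball, not_lt] at hy2
            have hxy : ρ (j+1) ≤ ‖x₀ - y‖ := by
              rw [norm_sub_rev, ← dist_eq_norm]; exact hy2
            rw [← ENNReal.ofReal_mul (Real.rpow_nonneg hr1.le _)]
            refine ENNReal.ofReal_le_ofReal ?_
            rw [div_eq_mul_inv, mul_comm ((ρ (j+1))^(-p))]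
            refine mul_le_mul_of_nonneg_left ?_ (abs_nonneg _)
            rw [Real.rpow_neg hr1.le]
            exact inv_anti₀ (Real.rpow_pos_of_pos hr1 _)
              (Real.rpow_le_rpow hr1.le hxy hppos.le)
        _ ≤ ∫⁻ y in ball x₀ (ρ j),
            ENNReal.ofReal ((ρ (j+1))^(-p)) * ENNReal.ofReal (|u y - mv j|) :=
          lintegral_mono_set diff_subset
        _ = ENNReal.ofReal ((ρ (j+1))^(-p)) *
            ∫⁻ y in ball x₀ (ρ j), ENNReal.ofReal (|u y - mv j|) :=
          lintegral_const_mul' _ _ ENNReal.ofReal_ne_top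
        _ = ENNReal.ofReal ((ρ (j+1))^(-p)) *
            ENNReal.ofReal ((volume (ball x₀ (ρ j))).toReal * av j) := by
          rw [← ofReal_integral_eq_lintegral_ofReal (hsubint _ _)
            (Filter.Eventually.of_forall (fun x => abs_nonneg _)), hInt j]
    have hout : ∫⁻ y in (ball x₀ (ρ (j+1)))ᶜ,
        ENNReal.ofReal (|u y - mv j| / ‖x₀ - y‖ ^ p) ≤
        (∫⁻ y in (ball x₀ (ρ j))ᶜ, ENNReal.ofReal (|u y - mv j| / ‖x₀ - y‖ ^ p)) +
        ENNReal.ofReal ((ρ (j+1))^(-p)) *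
          ENNReal.ofReal ((volume (ball x₀ (ρ j))).toReal * av j) := by
      have hsetid : (ball x₀ (ρ (j+1)))ᶜ ⊆
          (ball x₀ (ρ j))ᶜ ∪ (ball x₀ (ρ j) \ ball x₀ (ρ (j+1))) := by
        intro y hy
        by_cases h : y ∈ ball x₀ (ρ j)
        · exact Or.inr ⟨h, hy⟩
        · exact Or.inl h
      calc ∫⁻ y in (ball x₀ (ρ (j+1)))ᶜ,
          ENNReal.ofReal (|u y - mv j| / ‖x₀ - y‖ ^ p) ≤
          ∫⁻ y in (ball x₀ (ρ j))ᶜ ∪ (ball x₀ (ρ j) \ ball x₀ (ρ (j+1))),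
            ENNReal.ofReal (|u y - mv j| / ‖x₀ - y‖ ^ p) := lintegral_mono_set hsetid
        _ ≤ (∫⁻ y in (ball x₀ (ρ j))ᶜ, ENNReal.ofReal (|u y - mv j| / ‖x₀ - y‖ ^ p)) +
            ∫⁻ y in (ball x₀ (ρ j) \ ball x₀ (ρ (j+1))),
              ENNReal.ofReal (|u y - mv j| / ‖x₀ - y‖ ^ p) := lintegral_union_le _ _ _
        _ ≤ _ := add_le_add_right hann _
    -- put the three pieces together
    have hcomb : ∫⁻ y in (ball x₀ (ρ (j+1)))ᶜ,
        ENNReal.ofReal (|u y - mv (j+1)| / ‖x₀ - y‖ ^ p) ≤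
        (∫⁻ y in (ball x₀ (ρ j))ᶜ, ENNReal.ofReal (|u y - mv j| / ‖x₀ - y‖ ^ p)) +
        ENNReal.ofReal ((ρ (j+1))^(-p)) *
          ENNReal.ofReal ((volume (ball x₀ (ρ j))).toReal * av j) +
        ENNReal.ofReal (|mv (j+1) - mv j|) *
          (ENNReal.ofReal K * ENNReal.ofReal ((ρ (j+1)) ^ (-(2*s)))) := by
      refine le_trans hsplit (add_le_add hout (mul_le_mul_right htail1 _))
    -- multiply by (ρ (j+1))^(2s)
    calc T (j+1) = ENNReal.ofReal ((ρ (j+1))^(2*s)) *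
        ∫⁻ y in (ball x₀ (ρ (j+1)))ᶜ, ENNReal.ofReal (|u y - mv (j+1)| / ‖x₀ - y‖ ^ p) := by
          rw [hT]
      _ ≤ ENNReal.ofReal ((ρ (j+1))^(2*s)) *
          ((∫⁻ y in (ball x₀ (ρ j))ᶜ, ENNReal.ofReal (|u y - mv j| / ‖x₀ - y‖ ^ p)) +
           ENNReal.ofReal ((ρ (j+1))^(-p)) *
             ENNReal.ofReal ((volume (ball x₀ (ρ j))).toReal * av j) +
           ENNReal.ofReal (|mv (j+1) - mv j|) *
             (ENNReal.ofReal K * ENNReal.ofReal ((ρ (j+1)) ^ (-(2*s))))) :=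
        mul_le_mul_right hcomb _
      _ = ENNReal.ofReal ((ρ (j+1))^(2*s)) *
            (∫⁻ y in (ball x₀ (ρ j))ᶜ, ENNReal.ofReal (|u y - mv j| / ‖x₀ - y‖ ^ p)) +
          ENNReal.ofReal ((ρ (j+1))^(2*s)) *
            (ENNReal.ofReal ((ρ (j+1))^(-p)) *
              ENNReal.ofReal ((volume (ball x₀ (ρ j))).toReal * av j)) +
          ENNReal.ofReal ((ρ (j+1))^(2*s)) *
            (ENNReal.ofReal (|mv (j+1) - mv j|) *
              (ENNReal.ofReal K * ENNReal.ofReal ((ρ (j+1)) ^ (-(2*s))))) := by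
          rw [mul_add, mul_add]
      _ ≤ ENNReal.ofReal ((2:ℝ)^(-(2*s))) * T j +
          ENNReal.ofReal ((2:ℝ)^(n:ℕ) * V.toReal * av j) +
          ENNReal.ofReal (((2:ℝ)^(n:ℕ) * K) * av j) := by
          have h1 : ENNReal.ofReal ((ρ (j+1))^(2*s)) *
              (∫⁻ y in (ball x₀ (ρ j))ᶜ, ENNReal.ofReal (|u y - mv j| / ‖x₀ - y‖ ^ p)) =
              ENNReal.ofReal ((2:ℝ)^(-(2*s))) * T j := by
            have heq : (ρ (j+1))^(2*s) = (2:ℝ)^(-(2*s)) * (ρ j)^(2*s) := by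
              rw [hr0, Real.mul_rpow two_pos.le hr1.le, ← mul_assoc,
                ← Real.rpow_add two_pos]
              norm_num
            rw [hT]
            simp only
            rw [heq, ENNReal.ofReal_mul (Real.rpow_nonneg two_pos.le _), mul_assoc]
          have h2 : ENNReal.ofReal ((ρ (j+1))^(2*s)) *
              (ENNReal.ofReal ((ρ (j+1))^(-p)) *
                ENNReal.ofReal ((volume (ball x₀ (ρ j))).toReal * av j)) =
              ENNReal.ofReal ((2:ℝ)^(n:ℕ) * V.toReal * av j) := by
            rw [← ENNReal.ofReal_mul (Real.rpow_nonneg hr1.le _),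
              ← ENNReal.ofReal_mul (by positivity)]
            refine congrArg ENNReal.ofReal ?_
            have hvol : (volume (ball x₀ (ρ j))).toReal = (ρ j)^(n:ℕ) * V.toReal := by
              rw [Measure.addHaar_ball_of_pos volume x₀ (hρpos j), ENNReal.toReal_mul,
                ENNReal.toReal_ofReal (by positivity), finrank_euclideanSpace_fin, hV]
            rw [hvol, hr0, mul_pow]
            have hrr : (ρ (j+1))^(2*s) * (ρ (j+1))^(-p) = (ρ (j+1))^(-(n:ℝ)) := by
              rw [← Real.rpow_add hr1]
              congr 1
              rw [hp]; ring
            calc (ρ (j+1))^(2*s) * ((ρ (j+1))^(-p) *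
                ((2:ℝ)^(n:ℕ) * (ρ (j+1))^(n:ℕ) * V.toReal * av j))
                = ((ρ (j+1))^(2*s) * (ρ (j+1))^(-p)) * (ρ (j+1))^(n:ℕ) *
                  ((2:ℝ)^(n:ℕ) * V.toReal * av j) := by ring
              _ = (2:ℝ)^(n:ℕ) * V.toReal * av j := by
                  rw [hrr, ← Real.rpow_natCast (ρ (j+1)) n, ← Real.rpow_add hr1]
                  norm_num
          have h3 : ENNReal.ofReal ((ρ (j+1))^(2*s)) *
              (ENNReal.ofReal (|mv (j+1) - mv j|) *
                (ENNReal.ofReal K * ENNReal.ofReal ((ρ (j+1)) ^ (-(2*s))))) ≤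
              ENNReal.ofReal (((2:ℝ)^(n:ℕ) * K) * av j) := by
            calc ENNReal.ofReal ((ρ (j+1))^(2*s)) *
                (ENNReal.ofReal (|mv (j+1) - mv j|) *
                  (ENNReal.ofReal K * ENNReal.ofReal ((ρ (j+1)) ^ (-(2*s))))) =
                ENNReal.ofReal ((ρ (j+1))^(2*s) * (|mv (j+1) - mv j| *
                  (K * (ρ (j+1)) ^ (-(2*s))))) := by
                  rw [← ENNReal.ofReal_mul hK0, ← ENNReal.ofReal_mul (abs_nonneg _),
                  ← ENNReal.ofReal_mul (Real.rpow_nonneg hr1.le _)]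
              _ ≤ ENNReal.ofReal ((ρ (j+1))^(2*s) * (((2:ℝ)^(n:ℕ) * av j) *
                  (K * (ρ (j+1)) ^ (-(2*s))))) := by
                  refine ENNReal.ofReal_le_ofReal ?_
                  have h2' : (0:ℝ) ≤ (ρ (j+1))^(2*s) := Real.rpow_nonneg hr1.le _
                  have h3' : (0:ℝ) ≤ K * (ρ (j+1)) ^ (-(2*s)) := by positivity
                  exact mul_le_mul_of_nonneg_left (mul_le_mul_of_nonneg_right hd h3') h2'
              _ = ENNReal.ofReal (((2:ℝ)^(n:ℕ) * K) * av j) := by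
                  refine congrArg ENNReal.ofReal ?_
                  rw [show (ρ (j+1))^(2*s) * (((2:ℝ)^(n:ℕ) * av j) * (K * (ρ (j+1)) ^ (-(2*s))))
                  = ((ρ (j+1))^(2*s) * (ρ (j+1)) ^ (-(2*s))) * (((2:ℝ)^(n:ℕ) * K) * av j)
                  by ring, ← Real.rpow_add hr1]
                  norm_num
          exact add_le_add (add_le_add (le_of_eq h1) (le_of_eq h2)) h3
      _ = ENNReal.ofReal ((2:ℝ)^(-(2*s))) * T j +
          ENNReal.ofReal c₁ * ENNReal.ofReal (av j) := by
          rw [add_assoc]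
          congr 1
          rw [← ENNReal.ofReal_add (mul_nonneg (mul_nonneg (by positivity) hVt) (hav0 j))
              (mul_nonneg (mul_nonneg (by positivity) hK0) (hav0 j)),
            ← ENNReal.ofReal_mul hc₁0]
          refine congrArg ENNReal.ofReal ?_
          rw [hc₁]
          ring
  -- the geometric sum
  set S : ℕ → ℝ≥0∞ := fun j => ∑ i ∈ Finset.range j,
      ENNReal.ofReal ((2:ℝ)^(-(2*s)*((j:ℝ)-(i:ℝ))) * av i) with hS
  have hmain : ∀ j, T j ≤ ENNReal.ofReal C' * S j +
      ENNReal.ofReal ((2:ℝ)^(-(2*s)*(j:ℝ))) * T 0 := by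
    intro j
    induction j with
    | zero =>
      rw [hS]
      simp only [Finset.range_zero, Finset.sum_empty, Nat.cast_zero, mul_zero,
        Real.rpow_zero, ENNReal.ofReal_one, one_mul, zero_add]
      exact le_refl _
    | succ j ih =>
      have hexp : ENNReal.ofReal ((2:ℝ)^(-(2*s))) * ENNReal.ofReal ((2:ℝ)^(-(2*s)*(j:ℝ))) =
          ENNReal.ofReal ((2:ℝ)^(-(2*s)*(((j+1):ℕ):ℝ))) := by
        rw [← ENNReal.ofReal_mul (Real.rpow_nonneg two_pos.le _), ← Real.rpow_add two_pos]
        refine congrArg ENNReal.ofReal (congrArg _ ?_)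
        push_cast
        ring
      have hSsucc : S (j+1) = ENNReal.ofReal ((2:ℝ)^(-(2*s))) * S j +
          ENNReal.ofReal ((2:ℝ)^(-(2*s))) * ENNReal.ofReal (av j) := by
        rw [hS]
        simp only
        rw [Finset.sum_range_succ]
        congr 1
        · rw [Finset.mul_sum]
          refine Finset.sum_congr rfl (fun i hi => ?_)
          rw [← ENNReal.ofReal_mul (Real.rpow_nonneg two_pos.le _), ← mul_assoc,
            ← Real.rpow_add two_pos]
          refine congrArg ENNReal.ofReal (congrArg (fun t => t * av i) (congrArg _ ?_))
          push_cast
          ring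
        · rw [← ENNReal.ofReal_mul (Real.rpow_nonneg two_pos.le _)]
          refine congrArg ENNReal.ofReal (congrArg (fun t => t * av j) (congrArg _ ?_))
          push_cast
          ring
      calc T (j+1) ≤ ENNReal.ofReal ((2:ℝ)^(-(2*s))) * T j +
            ENNReal.ofReal c₁ * ENNReal.ofReal (av j) := hrec j
        _ ≤ ENNReal.ofReal ((2:ℝ)^(-(2*s))) * (ENNReal.ofReal C' * S j +
              ENNReal.ofReal ((2:ℝ)^(-(2*s)*(j:ℝ))) * T 0) +
            ENNReal.ofReal c₁ * ENNReal.ofReal (av j) :=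
          add_le_add_left (mul_le_mul_right ih _) _
        _ = ENNReal.ofReal C' * (ENNReal.ofReal ((2:ℝ)^(-(2*s))) * S j) +
            ENNReal.ofReal ((2:ℝ)^(-(2*s)*(((j+1):ℕ):ℝ))) * T 0 +
            ENNReal.ofReal c₁ * ENNReal.ofReal (av j) := by
          rw [mul_add, ← mul_assoc, ← mul_assoc, hexp,
            mul_comm (ENNReal.ofReal ((2:ℝ)^(-(2*s)))) (ENNReal.ofReal C'), mul_assoc]
        _ = ENNReal.ofReal C' * S (j+1) +
            ENNReal.ofReal ((2:ℝ)^(-(2*s)*(((j+1):ℕ):ℝ))) * T 0 := by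
          rw [hSsucc, mul_add]
          have hcc : ENNReal.ofReal c₁ * ENNReal.ofReal (av j) =
              ENNReal.ofReal C' * (ENNReal.ofReal ((2:ℝ)^(-(2*s))) * ENNReal.ofReal (av j)) := by
            rw [← mul_assoc, ← ENNReal.ofReal_mul hC'0]
            refine congrArg (fun t => t * ENNReal.ofReal (av j)) (congrArg ENNReal.ofReal ?_)
            rw [hC', mul_assoc, ← Real.rpow_add two_pos]
            norm_num
          rw [hcc]
          ring
  -- identification of the pieces with the statement
  have hρ0 : ρ 0 = R := by
    rw [hρ]
    simp
  have hSN : S N = ∑ k ∈ Finset.Icc 1 N,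
      ENNReal.ofReal ((2:ℝ)^(-(2*s)*(k:ℝ)) *
        ⨍ x in ball x₀ ((2:ℝ)^((k:ℝ)-(N:ℝ)) * R),
          |u x - ⨍ y in ball x₀ ((2:ℝ)^((k:ℝ)-(N:ℝ)) * R), u y|) := by
    rw [hS]
    simp only
    refine Finset.sum_nbij' (fun i => N - i) (fun k => N - k) ?_ ?_ ?_ ?_ ?_
    · intro i hi
      simp only [Finset.mem_range] at hi
      simp only [Finset.mem_Icc]
      omega
    · intro k hk
      simp only [Finset.mem_Icc] at hk
      simp only [Finset.mem_range]
      omega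
    · intro i hi
      simp only [Finset.mem_range] at hi
      show N - (N - i) = i
      omega
    · intro k hk
      simp only [Finset.mem_Icc] at hk
      show N - (N - k) = k
      omega
    · intro i hi
      simp only [Finset.mem_range] at hi
      rw [Nat.cast_sub hi.le, show ((N:ℝ) - (i:ℝ)) - (N:ℝ) = -(i:ℝ) by ring]
  have hT0eq : ENNReal.ofReal ((2:ℝ)^(-(2*s)*(N:ℝ))) * T 0 =
      ENNReal.ofReal (((2:ℝ)^(-(N:ℝ)) * R)^(2*s)) *
        ∫⁻ y in (ball x₀ R)ᶜ,
          ENNReal.ofReal (|u y - ⨍ x in ball x₀ R, u x| / ‖x₀ - y‖ ^ p) := by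
    rw [hT, hmv]
    simp only [hρ0]
    rw [← mul_assoc, ← ENNReal.ofReal_mul (Real.rpow_nonneg two_pos.le _)]
    congr 2
    rw [Real.mul_rpow (Real.rpow_nonneg two_pos.le _) hR.le, ← Real.rpow_mul two_pos.le]
    congr 2
    ring
  have habs : ∀ X Y : ℝ≥0∞, ENNReal.ofReal C' * X + Y ≤ ENNReal.ofReal (C'+1) * (X + Y) := by
    intro X Y
    rw [mul_add]
    refine add_le_add (mul_le_mul_left (ENNReal.ofReal_le_ofReal (by linarith)) _) ?_
    calc Y = 1 * Y := (one_mul _).symm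
      _ ≤ ENNReal.ofReal (C'+1) * Y := by
        refine mul_le_mul_left ?_ _
        rw [← ENNReal.ofReal_one]
        exact ENNReal.ofReal_le_ofReal (by linarith)
  have hfin := hmain N
  rw [hSN, hT0eq] at hfin
  exact le_trans hfin (habs _ _)

end Main
end
end

section
/- Let s ∈ (0,1) and let Ω ⊂ ℝⁿ be a bounded measurable set. There is a constant C = C(n,s) such that for every measurable u : ℝⁿ → ℝ with u = 0 a.e. outside Ω, ∫_{ℝⁿ} |u(x)|² dx ≤ C |Ω|^{2s/n} ∫_{ℝⁿ} ∫_{ℝⁿ} |u(x)-u(y)|² / |x-y|^{n+2s} dy dx. -/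
open MeasureTheory Metric Set

/-- the fractional Friedrichs–Poincaré inequality. -/
theorem fractional_friedrichs_poincare (n : ℕ) (hn : 1 ≤ n) (s : ℝ)
    (hs0 : 0 < s) (hs1 : s < 1) :
    ∃ C > 0, ∀ (Ω : Set (EuclideanSpace ℝ (Fin n))), MeasurableSet Ω →
      Bornology.IsBounded Ω →
      ∀ u : EuclideanSpace ℝ (Fin n) → ℝ, Measurable u →
      (∀ᵐ x, x ∉ Ω → u x = 0) →
      ∫⁻ x, ENNReal.ofReal ((u x) ^ 2) ≤
        ENNReal.ofReal (C * (volume Ω).toReal ^ (2 * s / (n : ℝ))) *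
          ∫⁻ x, ∫⁻ y,
            ENNReal.ofReal ((u x - u y) ^ 2 / ‖x - y‖ ^ ((n : ℝ) + 2 * s)) := by
  have hω0 : (0:ENNReal) < volume (ball (0:EuclideanSpace ℝ (Fin n)) 1) :=
    measure_ball_pos _ _ one_pos
  have hωtop : volume (ball (0:EuclideanSpace ℝ (Fin n)) 1) < ⊤ := measure_ball_lt_top
  set ω : ℝ := (volume (ball (0:EuclideanSpace ℝ (Fin n)) 1)).toReal with hωdef
  have hωpos : 0 < ω := ENNReal.toReal_pos hω0.ne' hωtop.ne
  have hnR : (0:ℝ) < n := by exact_mod_cast hn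
  set p : ℝ := (n:ℝ) + 2*s with hpdef
  have hp : 0 < p := by positivity
  refine ⟨(2/ω) ^ (p/n), by positivity, ?_⟩
  intro Ω hΩm hΩb u hum hu0
  set m : ENNReal := volume Ω with hmdef
  have hmtop : m ≠ ⊤ := (hΩb.measure_lt_top).ne
  rcases eq_or_ne m 0 with hm0 | hm0
  · -- Ω is null, so u = 0 a.e.
    have hΩae : ∀ᵐ x, x ∉ Ω := by
      rw [ae_iff]; simpa using hm0
    have : ∀ᵐ x, ENNReal.ofReal ((u x)^2) = 0 := by
      filter_upwards [hu0, hΩae] with x hx hx'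
      simp [hx hx']
    rw [lintegral_congr_ae this]
    simp
  -- main case
  have hmR : 0 < m.toReal := ENNReal.toReal_pos hm0 hmtop
  set r : ℝ := (2 * m.toReal / ω) ^ ((n:ℝ)⁻¹) with hrdef
  have hbase : 0 < 2 * m.toReal / ω := by positivity
  have hr : 0 < r := Real.rpow_pos_of_pos hbase _
  -- the null set where u fails to vanish outside Ω
  set Eset : Set (EuclideanSpace ℝ (Fin n)) := {z | z ∉ Ω ∧ u z ≠ 0} with hEdef
  have hEnull : volume Eset = 0 := by
    have := hu0
    rw [ae_iff] at this
    convert this using 2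
    ext z
    simp [hEdef, _root_.not_imp]
  have hEm : MeasurableSet Eset :=
    (hΩm.compl).inter ((hum (measurableSet_singleton 0)).compl)
  -- volume of the ball of radius r is 2 * m
  have hball : ∀ x : EuclideanSpace ℝ (Fin n), volume (ball x r) = 2 * m := by
    intro x
    rw [Measure.addHaar_ball_of_pos volume x hr]
    have hfr : Module.finrank ℝ (EuclideanSpace ℝ (Fin n)) = n := finrank_euclideanSpace_fin
    rw [hfr]
    have hrn : r ^ (n:ℕ) = 2 * m.toReal / ω := by
      rw [hrdef, ← Real.rpow_natCast ((2 * m.toReal / ω) ^ ((n:ℝ)⁻¹)) n,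
        ← Real.rpow_mul hbase.le, inv_mul_cancel₀ hnR.ne', Real.rpow_one]
    rw [hrn, div_eq_mul_inv, ENNReal.ofReal_mul (by positivity),
      ENNReal.ofReal_mul (by norm_num), ENNReal.ofReal_toReal hmtop]
    have hωinv : ENNReal.ofReal ω⁻¹ * volume (ball (0:EuclideanSpace ℝ (Fin n)) 1) = 1 := by
      rw [← ENNReal.ofReal_toReal hωtop.ne, ← hωdef, ← ENNReal.ofReal_mul (by positivity),
        inv_mul_cancel₀ hωpos.ne', ENNReal.ofReal_one]
    rw [mul_assoc, hωinv, mul_one]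
    norm_num
  -- key pointwise estimate
  have key : ∀ x : EuclideanSpace ℝ (Fin n),
      ENNReal.ofReal ((u x)^2) * m ≤
        ENNReal.ofReal (r ^ p) *
          ∫⁻ y, ENNReal.ofReal ((u x - u y) ^ 2 / ‖x - y‖ ^ p) := by
    intro x
    set A : Set (EuclideanSpace ℝ (Fin n)) := ball x r \ (Ω ∪ Eset) with hAdef
    have hAm : MeasurableSet A := measurableSet_ball.diff (hΩm.union hEm)
    have hAvol : m ≤ volume A := by
      have hsub : ball x r ⊆ A ∪ (Ω ∪ Eset) := fun z hz => by
        by_cases h : z ∈ Ω ∪ Eset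
        · exact Or.inr h
        · exact Or.inl ⟨hz, h⟩
      have h1 : volume (ball x r) ≤ volume A + m := by
        calc volume (ball x r) ≤ volume (A ∪ (Ω ∪ Eset)) := measure_mono hsub
          _ ≤ volume A + volume (Ω ∪ Eset) := measure_union_le _ _
          _ ≤ volume A + (volume Ω + volume Eset) := by
              gcongr; exact measure_union_le _ _
          _ = volume A + m := by rw [hEnull, ← hmdef, add_zero]
      rw [hball x, two_mul] at h1
      exact (ENNReal.add_le_add_iff_right hmtop).mp h1
    have huA : ∀ y ∈ A, u y = 0 := by
      intro y hy
      by_contra h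
      exact hy.2 (Or.inr ⟨fun hin => hy.2 (Or.inl hin), h⟩)
    calc ENNReal.ofReal ((u x)^2) * m
        ≤ ENNReal.ofReal ((u x)^2) * volume A := by gcongr
      _ = ∫⁻ y in A, ENNReal.ofReal ((u x)^2) := (setLIntegral_const A _).symm
      _ ≤ ∫⁻ y in A, ENNReal.ofReal (r ^ p) *
            ENNReal.ofReal ((u x - u y) ^ 2 / ‖x - y‖ ^ p) := by
          apply setLIntegral_mono' hAm
          intro y hy
          rw [← ENNReal.ofReal_mul (by positivity)]
          apply ENNReal.ofReal_le_ofReal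
          have huy : u y = 0 := huA y hy
          rcases eq_or_ne (u x) 0 with hux | hux
          · rw [hux, zero_pow (by norm_num : 2 ≠ 0)]; positivity
          have hxy : x ≠ y := by
            intro h; rw [h, huy] at hux; exact hux rfl
          have hd : 0 < ‖x - y‖ := by
            simpa [sub_eq_zero] using hxy
          have hdr : ‖x - y‖ ≤ r := by
            have h' : dist x y < r := by rw [dist_comm]; exact mem_ball.mp hy.1
            rw [dist_eq_norm] at h'
            exact h'.le
          have hpw : ‖x - y‖ ^ p ≤ r ^ p := Real.rpow_le_rpow hd.le hdr hp.le
          have hdp : 0 < ‖x - y‖ ^ p := Real.rpow_pos_of_pos hd _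
          have hq : (0:ℝ) ≤ (u x - u y) ^ 2 / ‖x - y‖ ^ p := by positivity
          calc (u x)^2 = (u x - u y)^2 := by rw [huy, sub_zero]
            _ = (u x - u y) ^ 2 / ‖x - y‖ ^ p * ‖x - y‖ ^ p :=
                (div_mul_cancel₀ _ hdp.ne').symm
            _ ≤ (u x - u y) ^ 2 / ‖x - y‖ ^ p * r ^ p := by gcongr
            _ = r ^ p * ((u x - u y) ^ 2 / ‖x - y‖ ^ p) := by ring
      _ = ENNReal.ofReal (r ^ p) *
            ∫⁻ y in A, ENNReal.ofReal ((u x - u y) ^ 2 / ‖x - y‖ ^ p) :=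
          lintegral_const_mul' _ _ ENNReal.ofReal_ne_top
      _ ≤ ENNReal.ofReal (r ^ p) *
            ∫⁻ y, ENNReal.ofReal ((u x - u y) ^ 2 / ‖x - y‖ ^ p) := by
          gcongr
          exact Measure.restrict_le_self
  -- the value of r ^ p
  have hrp : r ^ p = ((2/ω) ^ (p/n) * m.toReal ^ (2 * s / (n:ℝ))) * m.toReal := by
    rw [hrdef, ← Real.rpow_mul hbase.le]
    have h1 : (n:ℝ)⁻¹ * p = p / n := by ring
    rw [h1]
    have h2 : 2 * m.toReal / ω = (2/ω) * m.toReal := by ring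
    rw [h2, Real.mul_rpow (by positivity) hmR.le]
    have h3 : p / n = 2 * s / (n:ℝ) + 1 := by
      rw [hpdef]; field_simp; ring
    rw [h3, Real.rpow_add hmR, Real.rpow_one, mul_assoc]
  -- integrate the key estimate
  have main : (∫⁻ x, ENNReal.ofReal ((u x)^2)) * m ≤
      ENNReal.ofReal (r ^ p) *
        ∫⁻ x, ∫⁻ y, ENNReal.ofReal ((u x - u y) ^ 2 / ‖x - y‖ ^ p) := by
    calc (∫⁻ x, ENNReal.ofReal ((u x)^2)) * m
        = ∫⁻ x, ENNReal.ofReal ((u x)^2) * m :=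
          (lintegral_mul_const' m _ hmtop).symm
      _ ≤ ∫⁻ x, ENNReal.ofReal (r ^ p) *
            ∫⁻ y, ENNReal.ofReal ((u x - u y) ^ 2 / ‖x - y‖ ^ p) :=
          lintegral_mono key
      _ = ENNReal.ofReal (r ^ p) *
            ∫⁻ x, ∫⁻ y, ENNReal.ofReal ((u x - u y) ^ 2 / ‖x - y‖ ^ p) :=
          lintegral_const_mul' _ _ ENNReal.ofReal_ne_top
  have hfac : ENNReal.ofReal (r ^ p) =
      ENNReal.ofReal ((2/ω) ^ (p/n) * m.toReal ^ (2 * s / (n:ℝ))) * m := by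
    rw [hrp, ENNReal.ofReal_mul (by positivity), ENNReal.ofReal_toReal hmtop]
  rw [hfac] at main
  rw [← ENNReal.mul_le_mul_iff_left hm0 hmtop]
  calc (∫⁻ x, ENNReal.ofReal ((u x)^2)) * m
      ≤ (ENNReal.ofReal ((2/ω) ^ (p/n) * m.toReal ^ (2 * s / (n:ℝ))) * m) *
          ∫⁻ x, ∫⁻ y, ENNReal.ofReal ((u x - u y) ^ 2 / ‖x - y‖ ^ p) := main
    _ = (ENNReal.ofReal ((2/ω) ^ (p/n) * m.toReal ^ (2 * s / (n:ℝ))) *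
          ∫⁻ x, ∫⁻ y, ENNReal.ofReal ((u x - u y) ^ 2 / ‖x - y‖ ^ p)) * m := by
        ring
end
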